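/- arXiv:2011.09194 — 7 statements merged into one kernel-verified Lean document; each statement's English description precedes it below -/
import Mathlib

section
/- Let X be a Hilbert space and Φ_lsc the class of functions φ(x) = -a‖x‖² + ⟨ℓ,x⟩ + c with a ≥ 0, ℓ ∈ X, c ∈ ℝ. A function f : X → ℝ ∪ {+∞} is Φ_lsc-convex (i.e. equal to the supremum of its Φ_lsc-minorants) if and only if f is lower semicontinuous and minorized by some function of the form q(x) = -a‖x‖² - c on X. -/
open RealInnerProductSpace

/-- In a Hilbert space, a function f : X → ℝ ∪ {+∞} is
Φ_lsc-convex iff it is lower semicontinuous and minorized by a quadratic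
function q(x) = -a‖x‖² - c. -/
theorem stmt_1 {X : Type*} [NormedAddCommGroup X] [InnerProductSpace ℝ X]
    [CompleteSpace X]
    (Φlsc : Set (X → ℝ))
    (hΦ : Φlsc = {φ | ∃ a ℓ c, 0 ≤ a ∧ ∀ x, φ x = -a * ‖x‖ ^ 2 + ⟪ℓ, x⟫ + c})
    (f : X → EReal) (hf : ∀ x, f x ≠ ⊥) :
    (∀ x, f x = ⨆ φ ∈ {φ ∈ Φlsc | ∀ y, (φ y : EReal) ≤ f y}, (φ x : EReal)) ↔
      (LowerSemicontinuous f ∧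
        ∃ a c : ℝ, 0 ≤ a ∧ ∀ x, ((-a * ‖x‖ ^ 2 - c : ℝ) : EReal) ≤ f x) := by
  subst hΦ
  set S : Set (X → ℝ) :=
    {φ ∈ {φ | ∃ a ℓ c, 0 ≤ a ∧ ∀ x, φ x = -a * ‖x‖ ^ 2 + ⟪ℓ, x⟫ + c} |
      ∀ y, (φ y : EReal) ≤ f y} with hS
  constructor
  · intro h
    constructor
    · -- lower semicontinuity
      have hfe : f = fun x => ⨆ φ ∈ S, ((φ x : ℝ) : EReal) := funext h
      rw [hfe]
      apply lowerSemicontinuous_biSup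
      intro φ hφ
      obtain ⟨⟨a, ℓ, c, ha, hform⟩, -⟩ := hφ
      have hcont : Continuous φ := by
        have : φ = fun x => -a * ‖x‖ ^ 2 + ⟪ℓ, x⟫ + c := funext hform
        rw [this]
        exact ((continuous_const.mul ((continuous_norm).pow 2)).add
          ((Continuous.inner continuous_const continuous_id))).add continuous_const
      exact (continuous_coe_real_ereal.comp hcont).lowerSemicontinuous
    · -- quadratic minorant
      have hne : S.Nonempty := by
        by_contra hemp
        have h0 := h 0
        rw [Set.not_nonempty_iff_eq_empty.mp hemp] at h0
        simp at h0
        exact hf 0 h0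
      obtain ⟨φ, ⟨a, ℓ, c, ha, hform⟩, hle⟩ := hne
      refine ⟨a + 1/2, ‖ℓ‖ ^ 2 / 2 - c, by linarith, fun x => ?_⟩
      refine le_trans ?_ (hle x)
      rw [EReal.coe_le_coe_iff, hform x]
      have h1 : -(‖ℓ‖ * ‖x‖) ≤ ⟪ℓ, x⟫ := neg_le_of_abs_le (abs_real_inner_le_norm ℓ x)
      nlinarith [sq_nonneg (‖ℓ‖ - ‖x‖)]
  · rintro ⟨hlsc, a, c, ha, hmin⟩ x₀
    refine le_antisymm ?_ (iSup₂_le fun φ hφ => hφ.2 x₀)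
    by_contra hlt
    push_neg at hlt
    obtain ⟨r, hr1, hr2⟩ := EReal.exists_between_coe_real hlt
    -- r is a real number with sup < r < f x₀; build a minorant equal to r at x₀
    have hrf : (r : EReal) < f x₀ := hr2
    obtain ⟨δ, hδ, hball⟩ := Metric.eventually_nhds_iff.mp (hlsc x₀ _ hrf)
    set K : ℝ := max 1 ((r + c + 2 * a * ‖x₀‖ ^ 2) / δ ^ 2) with hK
    have hK1 : (1 : ℝ) ≤ K := le_max_left _ _
    have hKδ : r + c + 2 * a * ‖x₀‖ ^ 2 ≤ K * δ ^ 2 := by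
      have := le_max_right 1 ((r + c + 2 * a * ‖x₀‖ ^ 2) / δ ^ 2)
      have hδ2 : (0:ℝ) < δ ^ 2 := by positivity
      calc r + c + 2 * a * ‖x₀‖ ^ 2
          = ((r + c + 2 * a * ‖x₀‖ ^ 2) / δ ^ 2) * δ ^ 2 := by field_simp
        _ ≤ K * δ ^ 2 := by nlinarith
    set lam : ℝ := 2 * a + K with hlam
    have hlam0 : 0 ≤ lam := by nlinarith
    set φ : X → ℝ := fun y => -lam * ‖y‖ ^ 2 + ⟪(2 * lam) • x₀, y⟫ + (r - lam * ‖x₀‖ ^ 2)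
      with hφdef
    have hφeq : ∀ y, φ y = r - lam * ‖y - x₀‖ ^ 2 := by
      intro y
      simp only [hφdef, real_inner_smul_left, norm_sub_sq_real, real_inner_comm x₀ y]
      ring
    have hφle : ∀ y, (φ y : EReal) ≤ f y := by
      intro y
      by_cases hd : dist y x₀ < δ
      · refine le_trans ?_ (hball hd).le
        rw [EReal.coe_le_coe_iff, hφeq y]
        nlinarith [sq_nonneg ‖y - x₀‖]
      · refine le_trans ?_ (hmin y)
        rw [EReal.coe_le_coe_iff, hφeq y]
        push_neg at hd
        rw [dist_eq_norm] at hd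
        have hny : ‖y‖ ≤ ‖y - x₀‖ + ‖x₀‖ := by
          calc ‖y‖ = ‖(y - x₀) + x₀‖ := by rw [sub_add_cancel]
            _ ≤ ‖y - x₀‖ + ‖x₀‖ := norm_add_le _ _
        set t := ‖y - x₀‖
        have ht : 0 ≤ t := norm_nonneg _
        have hy2 : ‖y‖ ^ 2 ≤ (t + ‖x₀‖) ^ 2 := by nlinarith [norm_nonneg y]
        have h1 : a * ‖y‖ ^ 2 ≤ 2 * a * t ^ 2 + 2 * a * ‖x₀‖ ^ 2 := by
          nlinarith [sq_nonneg (t - ‖x₀‖), mul_le_mul_of_nonneg_left hy2 ha]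
        have hδt : δ ^ 2 ≤ t ^ 2 := by nlinarith
        have h2 : K * δ ^ 2 ≤ K * t ^ 2 :=
          mul_le_mul_of_nonneg_left hδt (by linarith)
        nlinarith
    have hφS : φ ∈ S := ⟨⟨lam, (2 * lam) • x₀, r - lam * ‖x₀‖ ^ 2, hlam0, fun x => rfl⟩, hφle⟩
    have : (r : EReal) ≤ ⨆ φ ∈ S, ((φ x₀ : ℝ) : EReal) := by
      have hx0 : φ x₀ = r := by rw [hφeq x₀]; simp
      have := le_iSup₂ (f := fun ψ (_ : ψ ∈ S) => ((ψ x₀ : ℝ) : EReal)) φ hφS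
      rwa [hx0] at this
    exact absurd (lt_of_le_of_lt this hr1) (lt_irrefl _)
end

section
/- Assume p(x,·) is Ψ-convex on Y for all x ∈ X. Then zero duality gap, i.e. inf_x sup_{ψ∈Ψ} L(x,ψ) = sup_{ψ∈Ψ} inf_x L(x,ψ), holds if and only if V(y₀) = V**(y₀), where V(y) = inf_x p(x,y) is the optimal value function. -/
/-! By Ψ-convexity, `⨆ ψ ∈ Ψ, L x ψ = p x y₀`, so the primal value is `V y₀`. On the dual side,
`⨅ x, L x ψ = ψ y₀ - V* ψ` because the conjugate of the inf-projection `V = ⨅ x, p x ·` is the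
supremum of the conjugates of the `p x` (two suprema commute). Hence the dual value is `V** y₀`. -/

namespace EReal

noncomputable section

def addLeftOrderIso (c : ℝ) : EReal ≃o EReal :=
  Equiv.toOrderIso
    { toFun := fun x => c + x
      invFun := fun x => ((-c : ℝ) : EReal) + x
      left_inv := fun x => by
        dsimp only
        rw [← add_assoc, ← coe_add, neg_add_cancel, coe_zero, zero_add]
      right_inv := fun x => by
        dsimp only
        rw [← add_assoc, ← coe_add, add_neg_cancel, coe_zero, zero_add] }
    (fun _ _ h => add_le_add le_rfl h : Monotone ((c : EReal) + ·))
    (fun _ _ h => add_le_add le_rfl h : Monotone (((-c : ℝ) : EReal) + ·))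

def subLeftOrderIso (c : ℝ) : EReal ≃o ERealᵒᵈ :=
  negOrderIso.trans (addLeftOrderIso c).dual

theorem subLeftOrderIso_apply (c : ℝ) (x : EReal) :
    subLeftOrderIso c x = OrderDual.toDual ((c : EReal) - x) := by
  simp [subLeftOrderIso, addLeftOrderIso, negOrderIso, sub_eq_add_neg]

theorem coe_sub_iSup {ι : Sort*} (c : ℝ) (f : ι → EReal) :
    (c : EReal) - ⨆ i, f i = ⨅ i, ((c : EReal) - f i) := by
  simpa only [subLeftOrderIso_apply, ← toDual_iInf, OrderDual.toDual_inj] using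
    (subLeftOrderIso c).map_iSup f

theorem coe_sub_iInf {ι : Sort*} (c : ℝ) (f : ι → EReal) :
    (c : EReal) - ⨅ i, f i = ⨆ i, ((c : EReal) - f i) := by
  simpa only [subLeftOrderIso_apply, ← toDual_iSup, OrderDual.toDual_inj] using
    (subLeftOrderIso c).map_iInf f

end

end EReal

theorem iInf_coe_sub_iSup_sub_eq {X Y : Type*} (c : ℝ) (ψ : Y → ℝ) (p : X → Y → EReal) :
    ⨅ x, ((c : EReal) - ⨆ y, ((ψ y : EReal) - p x y)) =
      (c : EReal) - ⨆ y, ((ψ y : EReal) - ⨅ x, p x y) := by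
  simp only [EReal.coe_sub_iInf, ← EReal.coe_sub_iSup]
  rw [iSup_comm]

/-- If p(x,·) is Ψ-convex on Y for all x, then zero duality gap
inf sup L = sup inf L holds iff V(y₀) = V**(y₀). -/
theorem stmt_10 {X Y : Type*} (Ψ : Set (Y → ℝ)) (y₀ : Y)
    (p : X → Y → EReal)
    (hp : ∀ x y, p x y =
      ⨆ ψ ∈ Ψ, ((ψ y : EReal) - ⨆ z, ((ψ z : EReal) - p x z)))
    (V : Y → EReal) (hV : ∀ y, V y = ⨅ x, p x y)
    (L : X → (Y → ℝ) → EReal)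
    (hL : ∀ x ψ, L x ψ = (ψ y₀ : EReal) - ⨆ y, ((ψ y : EReal) - p x y)) :
    ((⨅ x, ⨆ ψ ∈ Ψ, L x ψ) = ⨆ ψ ∈ Ψ, ⨅ x, L x ψ) ↔
      V y₀ = ⨆ ψ ∈ Ψ, ((ψ y₀ : EReal) - ⨆ y, ((ψ y : EReal) - V y)) := by
  have primal_value : (⨅ x, ⨆ ψ ∈ Ψ, L x ψ) = V y₀ := by
    simp only [hV, hL, ← hp]
  have dual_function : ∀ ψ, ⨅ x, L x ψ = (ψ y₀ : EReal) - ⨆ y, ((ψ y : EReal) - V y) := by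
    intro ψ
    simp only [hL, hV, iInf_coe_sub_iSup_sub_eq]
  simp only [primal_value, dual_function]
end

section
/- If the Φ-subdifferential ∂_Ψ V(y₀) is nonempty, then there is zero duality gap val(L_P) = val(L_D), and the solution set of the Lagrangian dual problem sup_{ψ∈Ψ} (ψ(y₀) - V*(ψ)) coincides with ∂_Ψ V(y₀). Conversely, if val(L_P) = val(L_D) and both are finite, then the (possibly empty) optimal solution set of the dual coincides with ∂_Ψ V(y₀). -/
private lemma ereal_sub_sub (r : ℝ) (v : EReal) : (r : EReal) - ((r:EReal) - v) = v := by
  induction v using EReal.rec <;>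
    simp [← EReal.coe_sub, EReal.sub_bot, EReal.sub_top]

private lemma ereal_rearrange (a b : EReal) (p t : ℝ) :
    a + ((t - p : ℝ) : EReal) ≤ b ↔ (t:EReal) - b ≤ (p:EReal) - a := by
  induction a using EReal.rec <;> induction b using EReal.rec <;>
    simp [← EReal.coe_sub, ← EReal.coe_add, EReal.coe_le_coe_iff, EReal.sub_bot, EReal.sub_top,
      EReal.top_add_coe, EReal.bot_add] <;> constructor <;> intro h <;> linarith

private lemma ereal_le_of_sub_eq (r : ℝ) (x v : EReal) (h : (r:EReal) - x = v) :
    x ≤ (r:EReal) - v := by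
  induction x using EReal.rec <;> subst h <;>
    simp [← EReal.coe_sub, EReal.sub_bot, EReal.sub_top]

/-- (i) If ∂_Ψ V(y₀) ≠ ∅, then val(L_P) = val(L_D) and the dual
solution set coincides with ∂_Ψ V(y₀). (ii) If val(L_P) = val(L_D) and both are
finite, then the (possibly empty) dual solution set coincides with ∂_Ψ V(y₀). -/
theorem stmt_11 {Y : Type*} (Ψ : Set (Y → ℝ)) (y₀ : Y) (V : Y → EReal)
    (Vstar : (Y → ℝ) → EReal)
    (hVstar : ∀ ψ, Vstar ψ = ⨆ y, ((ψ y : EReal) - V y))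
    (q : (Y → ℝ) → EReal) (hq : ∀ ψ, q ψ = (ψ y₀ : EReal) - Vstar ψ)
    (valP valD : EReal) (hvalP : valP = V y₀) (hvalD : valD = ⨆ ψ ∈ Ψ, q ψ)
    (subdiff : Set (Y → ℝ))
    (hsub : subdiff = {ψ ∈ Ψ | ∀ y, V y₀ + ((ψ y - ψ y₀ : ℝ) : EReal) ≤ V y}) :
    (subdiff.Nonempty →
      valP = valD ∧ {ψ ∈ Ψ | q ψ = valD} = subdiff) ∧
    (valP = valD → valP ≠ ⊤ → valP ≠ ⊥ →
      {ψ ∈ Ψ | q ψ = valD} = subdiff) := by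
  -- Key equivalence: the subgradient inequality holds iff q ψ = V y₀
  have key : ∀ ψ : Y → ℝ,
      (∀ y, V y₀ + ((ψ y - ψ y₀ : ℝ) : EReal) ≤ V y) ↔ q ψ = V y₀ := by
    intro ψ
    have hstep : (∀ y, V y₀ + ((ψ y - ψ y₀ : ℝ) : EReal) ≤ V y) ↔
        Vstar ψ ≤ (ψ y₀ : EReal) - V y₀ := by
      rw [hVstar, iSup_le_iff]
      exact forall_congr' fun y => ereal_rearrange (V y₀) (V y) (ψ y₀) (ψ y)
    have hge : (ψ y₀ : EReal) - V y₀ ≤ Vstar ψ := by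
      rw [hVstar]; exact le_iSup (fun y => (ψ y : EReal) - V y) y₀
    rw [hstep]
    constructor
    · intro h
      rw [hq, le_antisymm h hge, ereal_sub_sub]
    · intro h
      rw [hq] at h
      exact ereal_le_of_sub_eq _ _ _ h
  -- Weak duality: q ψ ≤ V y₀
  have weak : ∀ ψ : Y → ℝ, q ψ ≤ V y₀ := by
    intro ψ
    have hge : (ψ y₀ : EReal) - V y₀ ≤ Vstar ψ := by
      rw [hVstar]; exact le_iSup (fun y => (ψ y : EReal) - V y) y₀
    calc q ψ = (ψ y₀ : EReal) - Vstar ψ := hq ψ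
      _ ≤ (ψ y₀ : EReal) - ((ψ y₀ : EReal) - V y₀) := EReal.sub_le_sub le_rfl hge
      _ = V y₀ := ereal_sub_sub _ _
  -- the set equality, assuming valD = V y₀
  have setEq : valD = V y₀ → {ψ ∈ Ψ | q ψ = valD} = subdiff := by
    intro hD
    ext ψ
    simp only [hsub, Set.mem_setOf_eq, hD]
    exact and_congr_right fun _ => (key ψ).symm
  constructor
  · rintro ⟨ψ₀, hψ₀⟩
    rw [hsub] at hψ₀
    obtain ⟨hΨ₀, hcond₀⟩ := hψ₀
    have hq₀ : q ψ₀ = V y₀ := (key ψ₀).1 hcond₀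
    have hPD : valP = valD := by
      rw [hvalP, hvalD]
      refine le_antisymm ?_ (iSup₂_le fun ψ _ => weak ψ)
      rw [← hq₀]
      exact le_iSup₂ (f := fun ψ _ => q ψ) ψ₀ hΨ₀
    exact ⟨hPD, setEq (hPD ▸ hvalP ▸ rfl)⟩
  · intro hPD _ _
    exact setEq (hPD ▸ hvalP ▸ rfl)
end

section
/- Let X be a Hilbert space, f, g : X → ℝ ∪ {+∞} Φ_lsc-convex, α ∈ ℝ, and x̄ ∈ dom f ∩ dom g with f(x̄) ≥ α and g(x̄) ≥ α. If 0 ∈ co(∂_lsc f(x̄) ∪ ∂_lsc g(x̄)) (the zero subgradient condition), then there exist φ₁ ∈ supp(f) and φ₂ ∈ supp(g) (Φ_lsc minorants of f, g respectively) such that {x : φ₁(x) < α} ∩ {x : φ₂(x) < α} = ∅. -/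
open RealInnerProductSpace Set

/-!
The subgradient inequality at `x₀` is linear in the subgradient `p = (a, v)`: writing
`e_x p = ⟪v, x - x₀⟫ - a‖x‖² + a‖x₀‖²`, a subgradient `p` of `h` with `α ≤ h x₀` yields the
`Φ_lsc`-minorant `x ↦ α + e_x p` of `h`, whose strict `α`-sublevel set is `{x | e_x p < 0}`.
Each `∂_lsc h x₀` is convex, so `0 ∈ co (∂_lsc f x₀ ∪ ∂_lsc g x₀)` means that `0` lies in one of
them or on a segment `[p, q]` with `p ∈ ∂_lsc f x₀`, `q ∈ ∂_lsc g x₀`. In the first case the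
minorant from `p = 0` is the constant `α`, with empty sublevel set, and the other function, being
`Φ_lsc`-convex and not `⊥` at `x₀`, has some minorant. In the second, a point `x` in both sublevel sets would give `e_x p < 0` and `e_x q < 0`, while by
linearity `0 = e_x 0` lies on the segment `[e_x p, e_x q]`.
-/

lemma exists_minorant_of_ne_bot {X : Type*} {Φ : Set (X → ℝ)} {h : X → EReal} {x₀ : X}
    (hconv : h x₀ = ⨆ φ ∈ {φ ∈ Φ | ∀ y, (φ y : EReal) ≤ h y}, (φ x₀ : EReal))
    (hx₀ : h x₀ ≠ ⊥) : ∃ φ ∈ Φ, ∀ y, (φ y : EReal) ≤ h y := by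
  by_contra! hnone
  refine hx₀ (hconv.trans ?_)
  simp only [iSup_eq_bot, mem_ofPred_eq]
  intro φ ⟨hφ, hφh⟩
  obtain ⟨y, hy⟩ := hnone φ hφ
  exact absurd (hφh y) hy.not_ge

section

variable {X : Type*} [NormedAddCommGroup X] [InnerProductSpace ℝ X]

def lscPairing (x₀ x : X) : ℝ × X →ₗ[ℝ] ℝ where
  toFun p := ⟪p.2, x - x₀⟫ - p.1 * ‖x‖ ^ 2 + p.1 * ‖x₀‖ ^ 2
  map_add' p q := by
    simp only [Prod.fst_add, Prod.snd_add, inner_add_left]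
    ring
  map_smul' c p := by
    simp only [Prod.smul_fst, Prod.smul_snd, real_inner_smul_left, smul_eq_mul, RingHom.id_apply]
    ring

lemma lscPairing_apply (x₀ x : X) (p : ℝ × X) :
    lscPairing x₀ x p = ⟪p.2, x - x₀⟫ - p.1 * ‖x‖ ^ 2 + p.1 * ‖x₀‖ ^ 2 :=
  rfl

def lscSubdiff (h : X → EReal) (x₀ : X) : Set (ℝ × X) :=
  {p | 0 ≤ p.1 ∧ ∀ x, h x₀ + (lscPairing x₀ x p : EReal) ≤ h x}

variable (X) in
def lscQuadratics : Set (X → ℝ) :=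
  {φ | ∃ a ℓ c, 0 ≤ a ∧ ∀ x, φ x = -a * ‖x‖ ^ 2 + ⟪ℓ, x⟫ + c}

lemma convex_setOf_add_coe_le (c d : EReal) : Convex ℝ {r : ℝ | c + r ≤ d} :=
  (show IsLowerSet {r : ℝ | c + r ≤ d} from fun _ _ hsr hr =>
    le_trans (add_le_add_right (EReal.coe_le_coe_iff.2 hsr) c) hr).ordConnected.convex

lemma convex_lscSubdiff (h : X → EReal) (x₀ : X) : Convex ℝ (lscSubdiff h x₀) := by
  have : lscSubdiff h x₀ = {p : ℝ × X | 0 ≤ p.1} ∩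
      ⋂ x, lscPairing x₀ x ⁻¹' {r : ℝ | h x₀ + r ≤ h x} := by
    ext p
    simp [lscSubdiff]
  rw [this]
  exact ((convex_Ici 0).linear_preimage (LinearMap.fst ℝ ℝ X)).inter
    (convex_iInter fun x => (convex_setOf_add_coe_le _ _).linear_preimage _)

lemma add_lscPairing_mem_lscQuadratics (x₀ : X) (α : ℝ) {p : ℝ × X} (hp : 0 ≤ p.1) :
    (fun x => α + lscPairing x₀ x p) ∈ lscQuadratics X :=
  ⟨p.1, p.2, α - ⟪p.2, x₀⟫ + p.1 * ‖x₀‖ ^ 2, hp, fun x => by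
    simp only [lscPairing_apply, inner_sub_right]
    ring⟩

lemma add_lscPairing_le_of_mem_lscSubdiff {h : X → EReal} {x₀ : X} {α : ℝ} {p : ℝ × X}
    (hp : p ∈ lscSubdiff h x₀) (hα : (α : EReal) ≤ h x₀) (x : X) :
    ((α + lscPairing x₀ x p : ℝ) : EReal) ≤ h x := by
  rw [EReal.coe_add]
  exact le_trans (by gcongr) (hp.2 x)

lemma mem_or_mem_or_mem_segment_of_mem_convexHull_union {E : Type*} [AddCommGroup E]
    [Module ℝ E] {s t : Set E} (hs : Convex ℝ s) (ht : Convex ℝ t) {z : E}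
    (hz : z ∈ convexHull ℝ (s ∪ t)) :
    z ∈ s ∨ z ∈ t ∨ ∃ a ∈ s, ∃ b ∈ t, z ∈ segment ℝ a b := by
  rcases s.eq_empty_or_nonempty with rfl | hs₀
  · rw [empty_union, ht.convexHull_eq] at hz
    exact Or.inr (Or.inl hz)
  rcases t.eq_empty_or_nonempty with rfl | ht₀
  · rw [union_empty, hs.convexHull_eq] at hz
    exact Or.inl hz
  rw [hs.convexHull_union ht hs₀ ht₀, mem_convexJoin] at hz
  exact Or.inr (Or.inr hz)

lemma sublevel_inter_sublevel_eq_empty {x₀ : X} (α : ℝ) {p q : ℝ × X}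
    (h0 : (0 : ℝ × X) ∈ segment ℝ p q) :
    {x | α + lscPairing x₀ x p < α} ∩ {x | α + lscPairing x₀ x q < α} = ∅ := by
  refine eq_empty_of_forall_notMem fun x ⟨hpx, hqx⟩ => ?_
  have := ((convex_Iio 0).linear_preimage (lscPairing x₀ x)).segment_subset
    (by simpa using hpx) (by simpa using hqx) h0
  simp at this

end

theorem stmt_12_general {X : Type*} [NormedAddCommGroup X] [InnerProductSpace ℝ X]
    (Φlsc : Set (X → ℝ))
    (hΦ : Φlsc = {φ | ∃ a ℓ c, 0 ≤ a ∧ ∀ x, φ x = -a * ‖x‖ ^ 2 + ⟪ℓ, x⟫ + c})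
    (f g : X → EReal)
    (hfconv : ∀ x, f x = ⨆ φ ∈ {φ ∈ Φlsc | ∀ y, (φ y : EReal) ≤ f y}, (φ x : EReal))
    (hgconv : ∀ x, g x = ⨆ φ ∈ {φ ∈ Φlsc | ∀ y, (φ y : EReal) ≤ g y}, (φ x : EReal))
    (α : ℝ) (x₀ : X)
    (hfα : (α : EReal) ≤ f x₀) (hgα : (α : EReal) ≤ g x₀)
    (hzero : (0, 0) ∈ convexHull ℝ
      ({p : ℝ × X | 0 ≤ p.1 ∧ ∀ x,
          f x₀ + ((⟪p.2, x - x₀⟫ - p.1 * ‖x‖ ^ 2 + p.1 * ‖x₀‖ ^ 2 : ℝ) : EReal) ≤ f x} ∪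
       {p : ℝ × X | 0 ≤ p.1 ∧ ∀ x,
          g x₀ + ((⟪p.2, x - x₀⟫ - p.1 * ‖x‖ ^ 2 + p.1 * ‖x₀‖ ^ 2 : ℝ) : EReal) ≤ g x})) :
    ∃ φ₁ ∈ Φlsc, ∃ φ₂ ∈ Φlsc,
      (∀ y, (φ₁ y : EReal) ≤ f y) ∧ (∀ y, (φ₂ y : EReal) ≤ g y) ∧
      {x | φ₁ x < α} ∩ {x | φ₂ x < α} = ∅ := by
  subst hΦ
  change (0 : ℝ × X) ∈ convexHull ℝ (lscSubdiff f x₀ ∪ lscSubdiff g x₀) at hzero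
  have hmem {p : ℝ × X} (hp : 0 ≤ p.1) := add_lscPairing_mem_lscQuadratics x₀ α hp
  obtain hf0 | hg0 | ⟨p, hp, q, hq, h0⟩ := mem_or_mem_or_mem_segment_of_mem_convexHull_union
    (convex_lscSubdiff f x₀) (convex_lscSubdiff g x₀) hzero
  · obtain ⟨φ₂, hφ₂, hφ₂g⟩ := exists_minorant_of_ne_bot (hgconv x₀) (ne_bot_of_le_ne_bot
      (EReal.coe_ne_bot α) hgα)
    exact ⟨_, hmem hf0.1, φ₂, hφ₂, add_lscPairing_le_of_mem_lscSubdiff hf0 hfα, hφ₂g,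
      by simp⟩
  · obtain ⟨φ₁, hφ₁, hφ₁f⟩ := exists_minorant_of_ne_bot (hfconv x₀) (ne_bot_of_le_ne_bot
      (EReal.coe_ne_bot α) hfα)
    exact ⟨φ₁, hφ₁, _, hmem hg0.1, hφ₁f, add_lscPairing_le_of_mem_lscSubdiff hg0 hgα,
      by simp⟩
  · exact ⟨_, hmem hp.1, _, hmem hq.1, add_lscPairing_le_of_mem_lscSubdiff hp hfα,
      add_lscPairing_le_of_mem_lscSubdiff hq hgα, sublevel_inter_sublevel_eq_empty α h0⟩

/-- If Φ_lsc-convex f, g satisfy the zero subgradient condition at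
x₀ ∈ dom f ∩ dom g with f(x₀) ≥ α and g(x₀) ≥ α, then there exist minorants
φ₁ ∈ supp f, φ₂ ∈ supp g with the intersection property at level α. -/
theorem stmt_12 {X : Type*} [NormedAddCommGroup X] [InnerProductSpace ℝ X]
    [CompleteSpace X]
    (Φlsc : Set (X → ℝ))
    (hΦ : Φlsc = {φ | ∃ a ℓ c, 0 ≤ a ∧ ∀ x, φ x = -a * ‖x‖ ^ 2 + ⟪ℓ, x⟫ + c})
    (f g : X → EReal)
    (hfconv : ∀ x, f x = ⨆ φ ∈ {φ ∈ Φlsc | ∀ y, (φ y : EReal) ≤ f y}, (φ x : EReal))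
    (hgconv : ∀ x, g x = ⨆ φ ∈ {φ ∈ Φlsc | ∀ y, (φ y : EReal) ≤ g y}, (φ x : EReal))
    (α : ℝ) (x₀ : X) (hfx₀ : f x₀ ≠ ⊤) (hgx₀ : g x₀ ≠ ⊤)
    (hfα : (α : EReal) ≤ f x₀) (hgα : (α : EReal) ≤ g x₀)
    (hzero : (0, 0) ∈ convexHull ℝ
      ({p : ℝ × X | 0 ≤ p.1 ∧ ∀ x,
          f x₀ + ((⟪p.2, x - x₀⟫ - p.1 * ‖x‖ ^ 2 + p.1 * ‖x₀‖ ^ 2 : ℝ) : EReal) ≤ f x} ∪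
       {p : ℝ × X | 0 ≤ p.1 ∧ ∀ x,
          g x₀ + ((⟪p.2, x - x₀⟫ - p.1 * ‖x‖ ^ 2 + p.1 * ‖x₀‖ ^ 2 : ℝ) : EReal) ≤ g x})) :
    ∃ φ₁ ∈ Φlsc, ∃ φ₂ ∈ Φlsc,
      (∀ y, (φ₁ y : EReal) ≤ f y) ∧ (∀ y, (φ₂ y : EReal) ≤ g y) ∧
      {x | φ₁ x < α} ∩ {x | φ₂ x < α} = ∅ :=
  stmt_12_general Φlsc hΦ f g hfconv hgconv α x₀ hfα hgα hzero
end

section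
/- Let X be a Banach space with dual X*, and let φ₁(x) = ⟨z₁*,x⟩ + d₁ and φ₂(x) = ⟨z₂*,x⟩ + d₂ be affine continuous functions, and β ∈ ℝ, ε > 0. Then {x : φ₁(x) < β - ε} ∩ {x : φ₂(x) < β - ε} = ∅ if and only if there exists t₀ ∈ [0,1] with t₀ z₁* + (1-t₀) z₂* = 0 and t₀ d₁ + (1-t₀) d₂ ≥ β - ε. -/
/-!
Write `a = β - ε - d₁`, `b = β - ε - d₂`; disjointness says `z₁ x < a → b ≤ z₂ x`. If `z₁ ≠ 0`,
then `z₂` is bounded below on every line parallel to `ker z₁` through the (nonempty) first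
sublevel set, so `ker z₁ ≤ ker z₂` and `z₂ = μ • z₁`. The condition becomes `∀ s < a, b ≤ μ s`,
which forces `μ ≤ 0` and `b ≤ μ a`, and `t₀ = -μ / (1 - μ)` is the required weight.
The case `z₁ = 0` is immediate, and the converse is a one-line convexity estimate.
-/

open Filter LinearMap Topology

lemma eq_zero_of_forall_le_add_mul {b c r : ℝ} (h : ∀ s : ℝ, b ≤ c + s * r) : r = 0 := by
  by_contra hr
  have := h ((b - c - 1) / r)
  rw [div_mul_cancel₀ _ hr] at this
  linarith

lemma nonpos_of_forall_lt_le_mul {a b μ : ℝ} (h : ∀ s < a, b ≤ μ * s) : μ ≤ 0 := by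
  by_contra! hμ
  have hs : min (a - 1) ((b - 1) / μ) < a := (min_le_left _ _).trans_lt (by linarith)
  have := (h _ hs).trans (mul_le_mul_of_nonneg_left (min_le_right _ _) hμ.le)
  rw [mul_div_cancel₀ _ hμ.ne'] at this
  linarith

lemma le_mul_of_forall_lt_le_mul {a b μ : ℝ} (h : ∀ s < a, b ≤ μ * s) : b ≤ μ * a :=
  ge_of_tendsto (x := 𝓝[<] a) ((continuous_const_mul μ).tendsto a |>.mono_left nhdsWithin_le_nhds)
    (eventually_nhdsWithin_of_forall h)

namespace LinearMap

variable {V : Type*} [AddCommGroup V] [Module ℝ V]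

lemma eq_zero_of_forall_le {f : V →ₗ[ℝ] ℝ} {b : ℝ} (h : ∀ x, b ≤ f x) : f = 0 := by
  ext x
  exact eq_zero_of_forall_le_add_mul (c := 0) fun s => by simpa using h (s • x)

lemma exists_eq_smul_of_ker_le {f g : V →ₗ[ℝ] ℝ} (h : ker f ≤ ker g) : ∃ μ : ℝ, g = μ • f := by
  have := mem_span_of_iInf_ker_le_ker (L := fun _ : Unit => f) (K := g) (by simpa using h)
  rw [Set.range_const, Submodule.mem_span_singleton] at this
  obtain ⟨μ, hμ⟩ := this
  exact ⟨μ, hμ.symm⟩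

lemma ker_le_ker_of_forall_lt_imp_le {f g : V →ₗ[ℝ] ℝ} {a b : ℝ} {x₀ : V} (hx₀ : f x₀ < a)
    (h : ∀ x, f x < a → b ≤ g x) : ker f ≤ ker g := by
  intro y hy
  rw [mem_ker] at hy ⊢
  exact eq_zero_of_forall_le_add_mul fun s => by simpa [hy, hx₀] using h (x₀ + s • y)

lemma exists_convexComb_eq_zero_of_forall_lt_imp_le {f g : V →ₗ[ℝ] ℝ} {a b : ℝ}
    (h : ∀ x, f x < a → b ≤ g x) :
    ∃ t : ℝ, 0 ≤ t ∧ t ≤ 1 ∧ t • f + (1 - t) • g = 0 ∧ t * a + (1 - t) * b ≤ 0 := by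
  by_cases hf : f = 0
  · subst hf
    by_cases ha : a ≤ 0
    · exact ⟨1, zero_le_one, le_rfl, by simp, by simpa using ha⟩
    · have hg : ∀ x, b ≤ g x := fun x => h x (by simpa using ha)
      obtain rfl := eq_zero_of_forall_le hg
      exact ⟨0, le_rfl, zero_le_one, by simp, by simpa using hg 0⟩
  have hsurj := surjective_of_ne_zero hf
  obtain ⟨x₀, hx₀⟩ := hsurj (a - 1)
  obtain ⟨μ, rfl⟩ := exists_eq_smul_of_ker_le (ker_le_ker_of_forall_lt_imp_le (a := a)
    (by linarith) h)
  have hμ : ∀ s < a, b ≤ μ * s := fun s hs => by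
    obtain ⟨x, rfl⟩ := hsurj s
    simpa using h x hs
  have hμ₀ := nonpos_of_forall_lt_le_mul hμ
  have hba := le_mul_of_forall_lt_le_mul hμ
  have hμ₁ : 0 < 1 - μ := by linarith
  refine ⟨-μ / (1 - μ), div_nonneg (by linarith) hμ₁.le, (div_le_one hμ₁).2 (by linarith), ?_, ?_⟩
  · ext x
    simp only [add_apply, smul_apply, smul_eq_mul, zero_apply]
    field_simp
    ring
  · field_simp
    linarith

theorem forall_lt_imp_le_iff_exists_convexComb {f g : V →ₗ[ℝ] ℝ} {a b : ℝ} :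
    (∀ x, f x < a → b ≤ g x) ↔
      ∃ t : ℝ, 0 ≤ t ∧ t ≤ 1 ∧ t • f + (1 - t) • g = 0 ∧ t * a + (1 - t) * b ≤ 0 := by
  refine ⟨exists_convexComb_eq_zero_of_forall_lt_imp_le, ?_⟩
  rintro ⟨t, ht₀, ht₁, hfg, hab⟩ x hfx
  by_contra! hgx
  have := LinearMap.congr_fun hfg x
  simp only [add_apply, smul_apply, smul_eq_mul, zero_apply] at this
  nlinarith [mul_nonneg ht₀ (sub_nonneg.2 hfx.le),
    mul_nonneg (sub_nonneg.2 ht₁) (sub_nonneg.2 hgx.le)]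

end LinearMap

theorem stmt_13_general {X : Type*} [NormedAddCommGroup X] [NormedSpace ℝ X]
    (z₁ z₂ : X →L[ℝ] ℝ) (d₁ d₂ β ε : ℝ) :
    ({x : X | z₁ x + d₁ < β - ε} ∩ {x : X | z₂ x + d₂ < β - ε} = ∅) ↔
      ∃ t₀ : ℝ, 0 ≤ t₀ ∧ t₀ ≤ 1 ∧ t₀ • z₁ + (1 - t₀) • z₂ = 0 ∧
        β - ε ≤ t₀ * d₁ + (1 - t₀) * d₂ := by
  have hdisj : {x : X | z₁ x + d₁ < β - ε} ∩ {x : X | z₂ x + d₂ < β - ε} = ∅ ↔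
      ∀ x, (z₁ : X →ₗ[ℝ] ℝ) x < β - ε - d₁ → β - ε - d₂ ≤ (z₂ : X →ₗ[ℝ] ℝ) x := by
    simp [Set.eq_empty_iff_forall_notMem, lt_sub_iff_add_lt]
  rw [hdisj, LinearMap.forall_lt_imp_le_iff_exists_convexComb]
  refine exists_congr fun t => and_congr_right' <| and_congr_right' <| and_congr ?_ ?_
  · rw [← ContinuousLinearMap.coe_inj]
    simp
  · constructor <;> intro <;> linarith

/-- For affine continuous φᵢ(x) = ⟨zᵢ*,x⟩ + dᵢ on a Banach space,
the strict sublevel sets at level β - ε are disjoint iff some convex combination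
of z₁*, z₂* vanishes with the corresponding combination of d₁, d₂ at least β - ε. -/
theorem stmt_13 {X : Type*} [NormedAddCommGroup X] [NormedSpace ℝ X]
    [CompleteSpace X]
    (z₁ z₂ : X →L[ℝ] ℝ) (d₁ d₂ β ε : ℝ) (hε : 0 < ε) :
    ({x : X | z₁ x + d₁ < β - ε} ∩ {x : X | z₂ x + d₂ < β - ε} = ∅) ↔
      ∃ t₀ : ℝ, 0 ≤ t₀ ∧ t₀ ≤ 1 ∧ t₀ • z₁ + (1 - t₀) • z₂ = 0 ∧
        β - ε ≤ t₀ * d₁ + (1 - t₀) * d₂ :=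
  stmt_13_general z₁ z₂ d₁ d₂ β ε
end

section
/- Let X be a Hilbert space and f : X → ℝ ∪ {+∞} a lower semicontinuous paraconvex function, i.e. there exists C > 0 such that f(tx+(1-t)y) ≤ t f(x) + (1-t) f(y) + C‖x-y‖² for all x, y ∈ X, t ∈ [0,1]. Then f is Φ_lsc-convex: f equals the pointwise supremum of its minorants of the form -a‖x‖² + ⟨ℓ,x⟩ + c with a ≥ 0. -/
open RealInnerProductSpace

lemma icc_subset_of_midpt {T : Set ℝ} (hT : IsClosed T) (h0 : (0:ℝ) ∈ T) (h1 : (1:ℝ) ∈ T)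
    (hm : ∀ a ∈ T, ∀ b ∈ T, (a+b)/2 ∈ T) : Set.Icc (0:ℝ) 1 ⊆ T := by
  intro t ht
  obtain ⟨ht0, ht1⟩ := ht
  let u : ℕ → ℝ × ℝ := fun n => Nat.rec (0,1)
    (fun _ p => if t ≤ (p.1+p.2)/2 then (p.1, (p.1+p.2)/2) else ((p.1+p.2)/2, p.2)) n
  have key : ∀ n, (u n).1 ∈ T ∧ (u n).2 ∈ T ∧ (u n).1 ≤ t ∧ t ≤ (u n).2 ∧
      (u n).2 - (u n).1 = (1/2)^n := by
    intro n
    induction n with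
    | zero => refine ⟨h0, h1, ht0, ht1, ?_⟩; show (1:ℝ) - 0 = (1/2)^0; norm_num
    | succ n ih =>
      obtain ⟨ha, hb, hat, htb, hd⟩ := ih
      have hmid : ((u n).1 + (u n).2)/2 ∈ T := hm _ ha _ hb
      have hsucc : u (n+1) = if t ≤ ((u n).1+(u n).2)/2 then ((u n).1, ((u n).1+(u n).2)/2)
          else (((u n).1+(u n).2)/2, (u n).2) := rfl
      rw [hsucc]
      split_ifs with h
      · exact ⟨ha, hmid, hat, h, by simp only; rw [pow_succ]; linarith⟩
      · exact ⟨hmid, hb, le_of_not_ge h, htb, by simp only; rw [pow_succ]; linarith⟩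
  have hlim : Filter.Tendsto (fun n => (u n).1) Filter.atTop (nhds t) := by
    have h2 : Filter.Tendsto (fun n => t - (1/2:ℝ)^n) Filter.atTop (nhds t) := by
      have := tendsto_pow_atTop_nhds_zero_of_lt_one (by norm_num : (0:ℝ) ≤ 1/2) (by norm_num)
      simpa using (tendsto_const_nhds (x := t)).sub this
    refine tendsto_of_tendsto_of_tendsto_of_le_of_le h2 tendsto_const_nhds ?_ ?_
    · intro n
      have := key n
      simp only
      linarith [this.2.2.1, this.2.2.2.1, this.2.2.2.2]
    · intro n; exact (key n).2.2.1
  exact hT.mem_of_tendsto hlim (Filter.Eventually.of_forall fun n => (key n).1)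

lemma convex_of_midpt {V : Type*} [NormedAddCommGroup V] [NormedSpace ℝ V] {s : Set V}
    (hs : IsClosed s) (hm : ∀ p ∈ s, ∀ q ∈ s, (1/2:ℝ) • p + (1/2:ℝ) • q ∈ s) :
    Convex ℝ s := by
  intro p hp q hq a b ha hb hab
  have hb1 : b ∈ Set.Icc (0:ℝ) 1 := ⟨hb, by linarith⟩
  set T : Set ℝ := {t : ℝ | (1-t) • p + t • q ∈ s} with hT
  have hTc : IsClosed T := by
    have : Continuous fun t : ℝ => (1-t) • p + t • q := by continuity
    exact hs.preimage this
  have hsub : Set.Icc (0:ℝ) 1 ⊆ T := by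
    apply icc_subset_of_midpt hTc
    · show ((1:ℝ)-0) • p + (0:ℝ) • q ∈ s; simpa using hp
    · show ((1:ℝ)-1) • p + (1:ℝ) • q ∈ s; simpa using hq
    · intro c hc d hd
      have := hm _ hc _ hd
      have heq : (1/2:ℝ) • ((1-c) • p + c • q) + (1/2:ℝ) • ((1-d) • p + d • q)
          = (1-(c+d)/2) • p + ((c+d)/2) • q := by
        module
      rw [heq] at this
      exact this
  have := hsub hb1
  have hab' : a = 1 - b := by linarith
  rw [hab']
  exact this

set_option maxHeartbeats 1000000 in
/-- A lower semicontinuous paraconvex function on a Hilbert space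
is Φ_lsc-convex: it is the pointwise supremum of its minorants of the form
-a‖x‖² + ⟨ℓ,x⟩ + c with a ≥ 0. -/
theorem stmt_17 {X : Type*} [NormedAddCommGroup X] [InnerProductSpace ℝ X]
    [CompleteSpace X]
    (f : X → EReal) (hbot : ∀ x, f x ≠ ⊥)
    (hlsc : LowerSemicontinuous f)
    (hpara : ∃ C : ℝ, 0 < C ∧ ∀ x y : X, ∀ t : ℝ, 0 ≤ t → t ≤ 1 →
      f (t • x + (1 - t) • y) ≤
        (t : EReal) * f x + ((1 - t : ℝ) : EReal) * f y + ((C * ‖x - y‖ ^ 2 : ℝ) : EReal)) :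
    ∀ x, f x = ⨆ φ ∈ {φ : X → ℝ |
        (∃ a ℓ c, 0 ≤ a ∧ ∀ z, φ z = -a * ‖z‖ ^ 2 + ⟪ℓ, z⟫ + c) ∧
        ∀ y, (φ y : EReal) ≤ f y}, (φ x : EReal) := by
  obtain ⟨C, hC, hP⟩ := hpara
  set S : Set (X → ℝ) := {φ : X → ℝ |
        (∃ a ℓ c, 0 ≤ a ∧ ∀ z, φ z = -a * ‖z‖ ^ 2 + ⟪ℓ, z⟫ + c) ∧
        ∀ y, (φ y : EReal) ≤ f y} with hS
  set E : Set (X × ℝ) :=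
    {p : X × ℝ | f p.1 + ((4*C*‖p.1‖^2 : ℝ) : EReal) ≤ (p.2 : EReal)} with hE
  -- membership characterization
  have memE : ∀ p : X × ℝ,
      p ∈ E ↔ ∃ v : ℝ, f p.1 = (v : EReal) ∧ v + 4*C*‖p.1‖^2 ≤ p.2 := by
    rintro ⟨z, t⟩
    constructor
    · intro hp
      have hp' : f z + ((4*C*‖z‖^2 : ℝ) : EReal) ≤ (t : EReal) := hp
      have hne : f z ≠ ⊤ := by
        intro h
        rw [h, EReal.top_add_coe] at hp'
        exact (EReal.coe_lt_top t).not_ge hp'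
      have hv : f z = (((f z).toReal : ℝ) : EReal) := (EReal.coe_toReal hne (hbot z)).symm
      rw [hv, ← EReal.coe_add, EReal.coe_le_coe_iff] at hp'
      exact ⟨(f z).toReal, hv, hp'⟩
    · rintro ⟨v, hv, hle⟩
      show f z + ((4*C*‖z‖^2 : ℝ) : EReal) ≤ (t : EReal)
      rw [hv, ← EReal.coe_add]
      exact EReal.coe_le_coe_iff.mpr hle
  -- E is closed
  have hEc : IsClosed E := by
    have hgl : LowerSemicontinuous fun z : X => f z + ((4*C*‖z‖^2 : ℝ) : EReal) := by
      apply hlsc.add'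
      · exact (continuous_coe_real_ereal.comp (by continuity)).lowerSemicontinuous
      · intro z
        exact EReal.continuousAt_add (Or.inr (EReal.coe_ne_bot _)) (Or.inr (EReal.coe_ne_top _))
    have h1 : IsClosed {p : X × EReal | (f p.1 + ((4*C*‖p.1‖^2 : ℝ) : EReal)) ≤ p.2} :=
      hgl.isClosed_epigraph
    have h2 : Continuous fun p : X × ℝ => (p.1, (p.2 : EReal)) :=
      continuous_fst.prodMk (continuous_coe_real_ereal.comp continuous_snd)
    exact h1.preimage h2
  -- E is midpoint convex
  have hEm : ∀ p ∈ E, ∀ q ∈ E, (1/2:ℝ) • p + (1/2:ℝ) • q ∈ E := by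
    rintro ⟨x1, s1⟩ hp ⟨y1, t1⟩ hq
    obtain ⟨v, hv, hvs⟩ := (memE _).mp hp
    obtain ⟨w, hw, hwt⟩ := (memE _).mp hq
    simp only [Prod.smul_mk, Prod.mk_add_mk, smul_eq_mul]
    apply (memE _).mpr
    have hhalf := hP x1 y1 (1/2) (by norm_num) (by norm_num)
    rw [hv, hw, show ((1:ℝ) - 1/2) = (1/2:ℝ) by norm_num] at hhalf
    rw [← EReal.coe_mul, ← EReal.coe_mul, ← EReal.coe_add, ← EReal.coe_add] at hhalf
    set m := (1/2:ℝ) • x1 + (1/2:ℝ) • y1 with hm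
    have hfm_ne : f m ≠ ⊤ := by
      intro h
      rw [h] at hhalf
      exact (EReal.coe_lt_top _).not_ge hhalf
    refine ⟨(f m).toReal, (EReal.coe_toReal hfm_ne (hbot m)).symm, ?_⟩
    have h1 : (f m).toReal ≤ 1/2*v + 1/2*w + C*‖x1-y1‖^2 := by
      rw [← EReal.coe_le_coe_iff, EReal.coe_toReal hfm_ne (hbot m)]
      exact hhalf
    have hpar := parallelogram_law_with_norm ℝ x1 y1
    have hmn : ‖m‖ = (1/2) * ‖x1 + y1‖ := by
      rw [show m = (1/2:ℝ) • (x1 + y1) by rw [hm]; module, norm_smul]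
      simp
    have hm2 : ‖m‖^2 = 1/4 * (‖x1+y1‖ * ‖x1+y1‖) := by rw [hmn]; ring
    have hkey : 4*C*‖m‖^2 = 2*C*‖x1‖^2 + 2*C*‖y1‖^2 - C*‖x1-y1‖^2 := by
      rw [hm2]; linear_combination C * hpar
    show (f m).toReal + 4*C*‖m‖^2 ≤ 1/2*s1 + 1/2*t1
    nlinarith [h1, hvs, hwt, hkey]
  have hEconv : Convex ℝ E := convex_of_midpt hEc hEm
  -- decomposition of functionals on X × ℝ
  have hdec : ∀ (ψ : (X × ℝ) →L[ℝ] ℝ) (z : X) (t : ℝ), ψ (z, t) = ψ (z, 0) + t * ψ (0, 1) := by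
    intro ψ z t
    have h : (z, t) = (z, (0:ℝ)) + t • ((0:X), (1:ℝ)) := by
      simp [Prod.ext_iff]
    rw [h, map_add, map_smul, smul_eq_mul]
  -- Riesz representation
  have riesz : ∀ (T : X →L[ℝ] ℝ), ∃ ℓ : X, ∀ z, ⟪ℓ, z⟫ = T z := fun T =>
    ⟨(InnerProductSpace.toDual ℝ X).symm T, fun z => InnerProductSpace.toDual_symm_apply⟩
  -- subtraction helper
  have subh : ∀ (z : X) (q : ℝ), ((q : ℝ) : EReal) ≤ f z + ((4*C*‖z‖^2 : ℝ) : EReal) →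
      ((q - 4*C*‖z‖^2 : ℝ) : EReal) ≤ f z := by
    intro z q h
    rcases eq_or_ne (f z) ⊤ with h' | h'
    · rw [h']; exact le_top
    · have hv : f z = (((f z).toReal : ℝ) : EReal) := (EReal.coe_toReal h' (hbot z)).symm
      rw [hv] at h ⊢
      rw [← EReal.coe_add, EReal.coe_le_coe_iff] at h
      exact EReal.coe_le_coe_iff.mpr (by linarith)
  -- a strictly separating functional with positive vertical part yields a minorant of f
  have minorize : ∀ (ψ : (X × ℝ) →L[ℝ] ℝ) (u : ℝ), (∀ p ∈ E, u < ψ p) → 0 < ψ (0,1) →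
      ∀ z : X, (((u - ψ (z,0)) / ψ (0,1) - 4*C*‖z‖^2 : ℝ) : EReal) ≤ f z := by
    intro ψ u hsep hs z
    apply subh
    rcases eq_or_ne (f z) ⊤ with h' | h'
    · rw [h', EReal.top_add_coe]; exact le_top
    · have hv : f z = (((f z).toReal : ℝ) : EReal) := (EReal.coe_toReal h' (hbot z)).symm
      set v := (f z).toReal
      have hmem : (z, v + 4*C*‖z‖^2) ∈ E := (memE _).mpr ⟨v, hv, le_refl _⟩
      have h2 := hsep _ hmem
      rw [hdec] at h2
      have h3 : (u - ψ (z,0)) / ψ (0,1) < v + 4*C*‖z‖^2 := by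
        rw [div_lt_iff₀ hs]; linarith
      rw [hv, ← EReal.coe_add]
      exact EReal.coe_le_coe_iff.mpr h3.le
  intro x
  apply le_antisymm
  · -- f x ≤ sup
    by_contra hlt
    rw [not_le] at hlt
    obtain ⟨r, hr1, hr2⟩ := EReal.lt_iff_exists_real_btwn.mp hlt
    -- it suffices to exhibit φ ∈ S with r ≤ φ x
    have contra : ∀ φ : X → ℝ, φ ∈ S → r ≤ φ x → False := by
      intro φ hφ hrx
      have h1 : ((φ x : ℝ) : EReal) ≤ ⨆ φ ∈ S, ((φ x : ℝ) : EReal) :=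
        le_iSup₂ (f := fun (φ : X → ℝ) (_ : φ ∈ S) => ((φ x : ℝ) : EReal)) φ hφ
      have h2 : ((r : ℝ) : EReal) ≤ ((φ x : ℝ) : EReal) := EReal.coe_le_coe_iff.mpr hrx
      exact absurd (h2.trans h1) (not_le.mpr hr1)
    by_cases hne : ∃ p, p ∈ E
    · obtain ⟨⟨x1, t1⟩, h1⟩ := hne
      obtain ⟨v1, hv1, hvt1⟩ := (memE _).mp h1
      -- positivity of vertical parts of separating functionals
      have snn : ∀ (ψ : (X × ℝ) →L[ℝ] ℝ) (u : ℝ), (∀ p ∈ E, u < ψ p) → 0 ≤ ψ (0,1) := by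
        intro ψ u hsep
        by_contra hneg
        rw [not_le] at hneg
        set s := ψ (0,1) with hs
        set t2 := max t1 ((u - ψ (x1,0))/s) with ht2
        have hmem : (x1, t2) ∈ E := (memE _).mpr ⟨v1, hv1, hvt1.trans (le_max_left _ _)⟩
        have h2 := hsep _ hmem
        rw [hdec] at h2
        have h3 : t2 * s ≤ u - ψ (x1,0) := by
          have h4 : (u - ψ (x1,0))/s ≤ t2 := le_max_right _ _
          have h5 := mul_le_mul_of_nonpos_right h4 hneg.le
          rwa [div_mul_cancel₀ _ (ne_of_lt hneg)] at h5
        linarith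
      -- global affine minorant of the shifted function
      set ρ1 := v1 + 4*C*‖x1‖^2 with hρ1
      have hnot1 : ((x1, ρ1 - 1) : X × ℝ) ∉ E := by
        intro hmem
        obtain ⟨v', hv', hle'⟩ := (memE _).mp hmem
        have : v' = v1 := by
          have := hv'.symm.trans hv1
          exact_mod_cast this
        rw [this] at hle'
        simp only [hρ1] at hle'
        linarith
      obtain ⟨ψ0, u0, hu0a, hu0b⟩ := geometric_hahn_banach_point_closed hEconv hEc hnot1
      set s0 := ψ0 (0,1) with hs0
      have hs0pos : 0 < s0 := by
        have hmem : ((x1, ρ1) : X × ℝ) ∈ E := (memE _).mpr ⟨v1, hv1, le_refl _⟩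
        have h2 := hu0b _ hmem
        rw [hdec] at h2 hu0a
        nlinarith
      -- the separation at (x, r + 4C‖x‖²)
      set ρ := r + 4*C*‖x‖^2 with hρ
      have hnot : ((x, ρ) : X × ℝ) ∉ E := by
        intro hmem
        obtain ⟨v', hv', hle'⟩ := (memE _).mp hmem
        rw [hv'] at hr2
        have : r < v' := EReal.coe_lt_coe_iff.mp hr2
        simp only [hρ] at hle'
        linarith
      obtain ⟨ψ, u2, hua, hub⟩ := geometric_hahn_banach_point_closed hEconv hEc hnot
      set s2 := ψ (0,1) with hs2
      have hs2nn : 0 ≤ s2 := snn ψ u2 hub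
      rcases lt_or_eq_of_le hs2nn with hspos | hszero
      · -- nonvertical separation
        obtain ⟨ℓ, hℓ⟩ := riesz ((-(1/s2)) • (ψ.comp (ContinuousLinearMap.inl ℝ X ℝ)))
        have hℓ' : ∀ z, ⟪ℓ, z⟫ = -(1/s2) * ψ (z, 0) := by
          intro z
          rw [hℓ z]
          simp [ContinuousLinearMap.smul_apply, ContinuousLinearMap.comp_apply]
        set φ : X → ℝ := fun z => -(4*C) * ‖z‖^2 + ⟪ℓ, z⟫ + u2/s2 with hφdef
        have hφeq : ∀ z, φ z = (u2 - ψ (z,0)) / s2 - 4*C*‖z‖^2 := by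
          intro z
          rw [hφdef]
          simp only
          rw [hℓ' z]
          field_simp
          ring
        have hφS : φ ∈ S := by
          refine ⟨⟨4*C, ℓ, u2/s2, by positivity, fun z => by rw [hφdef]⟩, ?_⟩
          intro y
          rw [hφeq y]
          exact minorize ψ u2 hub hspos y
        apply contra φ hφS
        rw [hφeq x]
        rw [hdec] at hua
        have : ρ < (u2 - ψ (x,0)) / s2 := by
          rw [lt_div_iff₀ hspos]; linarith
        simp only [hρ] at this
        linarith
      · -- vertical separation: combine with the global minorant
        have hvert : ∀ p ∈ E, u2 < ψ (p.1, 0) := by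
          rintro ⟨z, w⟩ hmem
          have h2 := hub _ hmem
          rw [hdec, ← hs2, ← hszero] at h2
          simpa using h2
        have hx2 : ψ (x, 0) < u2 := by
          have := hua
          rw [hdec, ← hs2, ← hszero] at this
          simpa using this
        set d := u2 - ψ (x, 0) with hd
        have hdpos : 0 < d := by simp only [hd]; linarith
        set n := max 0 (((r + 4*C*‖x‖^2) * s0 - u0 + ψ0 (x,0)) / d) with hn
        have hn0 : 0 ≤ n := le_max_left _ _
        set ψ' : (X × ℝ) →L[ℝ] ℝ := ψ0 + n • ψ with hψ'
        have hψ'app : ∀ p : X × ℝ, ψ' p = ψ0 p + n * ψ p := by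
          intro p; rw [hψ']; simp
        have hsep' : ∀ p ∈ E, u0 + n * u2 < ψ' p := by
          rintro ⟨z, w⟩ hmem
          rw [hψ'app]
          have h2 := hu0b _ hmem
          have h3 := hub _ hmem
          have h4 : n * u2 ≤ n * ψ (z, w) := mul_le_mul_of_nonneg_left h3.le hn0
          linarith
        have hψ'vert : ψ' (0, 1) = s0 := by
          rw [hψ'app, ← hs2, ← hszero]; ring
        have hψ'pos : 0 < ψ' (0, 1) := by rw [hψ'vert]; exact hs0pos
        obtain ⟨ℓ, hℓ⟩ := riesz ((-(1/s0)) • (ψ'.comp (ContinuousLinearMap.inl ℝ X ℝ)))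
        have hℓ' : ∀ z, ⟪ℓ, z⟫ = -(1/s0) * ψ' (z, 0) := by
          intro z
          rw [hℓ z]
          simp [ContinuousLinearMap.smul_apply, ContinuousLinearMap.comp_apply]
        set φ : X → ℝ := fun z => -(4*C) * ‖z‖^2 + ⟪ℓ, z⟫ + (u0 + n * u2)/s0 with hφdef
        have hφeq : ∀ z, φ z = (u0 + n * u2 - ψ' (z,0)) / s0 - 4*C*‖z‖^2 := by
          intro z
          rw [hφdef]
          simp only
          rw [hℓ' z]
          field_simp
          ring
        have hφS : φ ∈ S := by
          refine ⟨⟨4*C, ℓ, (u0 + n * u2)/s0, by positivity, fun z => by rw [hφdef]⟩, ?_⟩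
          intro y
          rw [hφeq y]
          have := minorize ψ' (u0 + n * u2) hsep' hψ'pos y
          rwa [hψ'vert] at this
        apply contra φ hφS
        rw [hφeq x]
        -- φ x = (u0 + n*u2 - ψ0(x,0) - n*ψ(x,0))/s0 - 4C‖x‖² ≥ r
        have hval : u0 + n * u2 - ψ' (x, 0) = u0 - ψ0 (x,0) + n * d := by
          rw [hψ'app, hd]; ring
        have hnlarge : ((r + 4*C*‖x‖^2) * s0 - u0 + ψ0 (x,0)) / d ≤ n := le_max_right _ _
        have h5 : (r + 4*C*‖x‖^2) * s0 - u0 + ψ0 (x,0) ≤ n * d := by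
          rw [div_le_iff₀ hdpos] at hnlarge
          linarith
        have h6 : (r + 4*C*‖x‖^2) * s0 ≤ u0 + n * u2 - ψ' (x, 0) := by
          rw [hval]; linarith
        have h7 : r + 4*C*‖x‖^2 ≤ (u0 + n * u2 - ψ' (x, 0)) / s0 := by
          rw [le_div_iff₀ hs0pos]; linarith
        linarith
    · -- E is empty: f ≡ ⊤
      have htop : ∀ y, f y = ⊤ := by
        intro y
        by_contra hy
        refine hne ⟨(y, (f y).toReal + 4*C*‖y‖^2), (memE _).mpr
          ⟨(f y).toReal, (EReal.coe_toReal hy (hbot y)).symm, le_refl _⟩⟩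
      refine contra (fun _ => r) ⟨⟨0, 0, r, le_refl _, fun z => by simp⟩, ?_⟩ (le_refl r)
      intro y
      rw [htop y]
      exact le_top
  · exact iSup₂_le fun φ hφ => hφ.2 x
end

section
/- Let X = ℓ², and let C = {x ∈ ℓ² : x_{2n-1} + x_{2n} = 0 for all n ≥ 1} and S = {x ∈ ℓ² : x_{2n} + x_{2n+1} = 0 for all n ≥ 1}. Then C ∩ S = {0}, and the orthogonal complement of S is S^⊥ = {x ∈ ℓ² : x₁ = 0 and x_{2n} = x_{2n+1} for all n ≥ 1}. -/
/-!
On `C ∩ S` the two families of relations together say `x (i + 1) = -x i` for every `i`, so all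
coordinates have the same absolute value, which square-summability forces to be `0`.

For `S^⊥`, testing against `e₀` and `e_{2n+1} - e_{2n+2}` (both in `S`) gives the two conditions.
Conversely, if `x` satisfies them and `y ∈ S`, the summand `x i * y i` of `⟪x, y⟫` changes sign under
the involution of `ℕ` fixing `0` and swapping `2n+1 ↔ 2n+2`, so the sum equals its own negative.
-/

open RealInnerProductSpace

theorem tsum_eq_zero_of_comp_perm_eq_neg {α β : Type*} [AddCommGroup α] [TopologicalSpace α]
    [IsTopologicalAddGroup α] [T2Space α] [IsAddTorsionFree α] (σ : Equiv.Perm β) {f : β → α}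
    (hf : ∀ i, f (σ i) = -f i) : ∑' i, f i = 0 := by
  have h : ∑' i, f i = -∑' i, f i :=
    calc ∑' i, f i = ∑' i, f (σ i) := (σ.tsum_eq f).symm
      _ = ∑' i, -f i := tsum_congr hf
      _ = -∑' i, f i := tsum_neg
  have h2 : 2 • ∑' i, f i = 2 • 0 := by
    rw [two_nsmul, smul_zero]
    nth_rw 2 [h]
    exact add_neg_cancel _
  exact IsAddTorsionFree.nsmul_right_injective two_ne_zero h2

theorem lp.eq_zero_of_norm_apply_eq {ι : Type*} [Infinite ι] {E : ι → Type*}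
    [∀ i, NormedAddCommGroup (E i)] {p : ENNReal} (hp : 0 < p.toReal) (f : lp E p) {c : ℝ}
    (hc : ∀ i, ‖f i‖ = c) : f = 0 := by
  have hsum : Summable fun _ : ι => c ^ p.toReal := by
    simpa only [hc] using (lp.memℓp f).summable hp
  have hc0 : c = 0 := by
    have hc_nonneg : 0 ≤ c := hc (Classical.arbitrary ι) ▸ norm_nonneg _
    exact (Real.rpow_eq_zero hc_nonneg hp.ne').mp ((summable_const_iff _).mp hsum)
  ext i
  simpa [hc0] using hc i

theorem norm_eq_norm_zero_of_succ_eq_neg {E : Type*} [SeminormedAddCommGroup E] {u : ℕ → E}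
    (hu : ∀ i, u (i + 1) = -u i) (i : ℕ) : ‖u i‖ = ‖u 0‖ := by
  induction i with
  | zero => rfl
  | succ i ih => rw [hu, norm_neg, ih]

theorem apply_succ_eq_neg_of_pair_sums_eq_zero {G : Type*} [AddGroup G] {x : ℕ → G}
    (hC : ∀ n, x (2 * n) + x (2 * n + 1) = 0) (hS : ∀ n, x (2 * n + 1) + x (2 * n + 2) = 0)
    (i : ℕ) : x (i + 1) = -x i := by
  rcases Nat.even_or_odd' i with ⟨n, rfl | rfl⟩
  · exact eq_neg_of_add_eq_zero_right (hC n)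
  · exact eq_neg_of_add_eq_zero_right (hS n)

namespace Nat

def shiftedPairSwap : ℕ → ℕ
  | 0 => 0
  | n + 1 => if Even n then n + 2 else n

@[simp] theorem shiftedPairSwap_zero : shiftedPairSwap 0 = 0 := rfl

@[simp] theorem shiftedPairSwap_two_mul_add_one (n : ℕ) :
    shiftedPairSwap (2 * n + 1) = 2 * n + 2 := by
  simp [shiftedPairSwap]

@[simp] theorem shiftedPairSwap_two_mul_add_two (n : ℕ) :
    shiftedPairSwap (2 * n + 2) = 2 * n + 1 := by
  simp [shiftedPairSwap, parity_simps]

theorem eq_zero_or_two_mul_add_one_or_two_mul_add_two (i : ℕ) :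
    i = 0 ∨ (∃ n, i = 2 * n + 1) ∨ (∃ n, i = 2 * n + 2) := by
  rcases Nat.even_or_odd' i with ⟨n, rfl | rfl⟩
  · cases n with
    | zero => exact .inl rfl
    | succ n => exact .inr (.inr ⟨n, by ring⟩)
  · exact .inr (.inl ⟨n, rfl⟩)

theorem shiftedPairSwap_involutive : Function.Involutive shiftedPairSwap := by
  intro i
  obtain rfl | ⟨n, rfl⟩ | ⟨n, rfl⟩ := eq_zero_or_two_mul_add_one_or_two_mul_add_two i <;> simp

end Nat

local notation "ℓ²" => lp (fun _ : ℕ => ℝ) 2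

theorem inner_eq_zero_of_pair_sums_eq_zero {x y : ℓ²} (hx0 : x 0 = 0)
    (hx : ∀ n, x (2 * n + 1) = x (2 * n + 2)) (hy : ∀ n, y (2 * n + 1) + y (2 * n + 2) = 0) :
    ⟪x, y⟫ = 0 := by
  rw [lp.inner_eq_tsum]
  refine tsum_eq_zero_of_comp_perm_eq_neg (Nat.shiftedPairSwap_involutive.toPerm _) fun i => ?_
  obtain rfl | ⟨n, rfl⟩ | ⟨n, rfl⟩ := Nat.eq_zero_or_two_mul_add_one_or_two_mul_add_two i
  · simp [hx0]
  · simp [hx n, eq_neg_of_add_eq_zero_right (hy n)]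
  · simp [hx n, eq_neg_of_add_eq_zero_right (hy n)]

theorem single_zero_pair_sums_eq_zero (n : ℕ) :
    (lp.single 2 0 1 : ℓ²) (2 * n + 1) + (lp.single 2 0 1 : ℓ²) (2 * n + 2) = 0 := by
  simp

theorem single_sub_single_pair_sums_eq_zero (m n : ℕ) :
    let y : ℓ² := lp.single 2 (2 * m + 1) 1 - lp.single 2 (2 * m + 2) 1
    y (2 * n + 1) + y (2 * n + 2) = 0 := by
  simp only [lp.coeFn_sub, Pi.sub_apply, lp.single_apply, Pi.single_apply]
  grind

/-- In ℓ² (coordinates x₁, x₂, … realized with x_{n+1} = x n for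
n : ℕ), let C = {x : x_{2n-1} + x_{2n} = 0 ∀ n ≥ 1} and
S = {x : x_{2n} + x_{2n+1} = 0 ∀ n ≥ 1}. Then C ∩ S = {0} and
S^⊥ = {x : x₁ = 0 and x_{2n} = x_{2n+1} ∀ n ≥ 1}. -/
theorem stmt_18
    (C S : Set (lp (fun _ : ℕ => ℝ) 2))
    (hC : C = {x | ∀ n : ℕ, x (2 * n) + x (2 * n + 1) = 0})
    (hS : S = {x | ∀ n : ℕ, x (2 * n + 1) + x (2 * n + 2) = 0}) :
    C ∩ S = {0} ∧
    {x : lp (fun _ : ℕ => ℝ) 2 | ∀ y ∈ S, ⟪x, y⟫ = 0} =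
      {x | x 0 = 0 ∧ ∀ n : ℕ, x (2 * n + 1) = x (2 * n + 2)} := by
  subst hC hS
  refine ⟨Set.eq_singleton_iff_unique_mem.mpr ⟨?_, ?_⟩, ?_⟩
  · constructor <;> intro n <;> simp
  · rintro x ⟨hC, hS⟩
    exact lp.eq_zero_of_norm_apply_eq (by norm_num) x
      (norm_eq_norm_zero_of_succ_eq_neg (apply_succ_eq_neg_of_pair_sums_eq_zero hC hS))
  ext x
  refine ⟨fun h => ⟨?_, fun n => ?_⟩,
    fun ⟨hx0, hx⟩ y hy => inner_eq_zero_of_pair_sums_eq_zero hx0 hx hy⟩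
  · simpa [lp.inner_single_right] using h _ single_zero_pair_sums_eq_zero
  · have h_test := h _ (single_sub_single_pair_sums_eq_zero n)
    simp only [inner_sub_right, lp.inner_single_right, RCLike.inner_apply, Real.ringHom_apply,
      one_mul] at h_test
    linarith
end
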